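/- arXiv:2402.03722 — 6 statements merged into one kernel-verified Lean document; each statement's English description precedes it below -/
import Mathlib

section
/- For all integers n ≥ 3, the maximum of the function f(l) = ((n+1)^2 - 3l(n+1) + 3l^2) / ((n+1)(n+1-l)l) over integers l with 1 ≤ l ≤ n is attained at l = 1 and l = n, and equals (1 - n + n^2)/(n + n^2). -/
/-- For all integers n ≥ 3, the maximum of
f(l) = ((n+1)^2 - 3l(n+1) + 3l^2) / ((n+1)(n+1-l)l)
over integers 1 ≤ l ≤ n is attained at l = 1 and l = n and equals (1-n+n^2)/(n+n^2). -/
theorem stmt_0 (n : ℤ) (hn : 3 ≤ n) :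
    (∀ l : ℤ, 1 ≤ l → l ≤ n →
      (((n : ℝ) + 1) ^ 2 - 3 * (l : ℝ) * ((n : ℝ) + 1) + 3 * (l : ℝ) ^ 2) /
        (((n : ℝ) + 1) * ((n : ℝ) + 1 - (l : ℝ)) * (l : ℝ))
        ≤ (1 - (n : ℝ) + (n : ℝ) ^ 2) / ((n : ℝ) + (n : ℝ) ^ 2)) ∧
    ((((n : ℝ) + 1) ^ 2 - 3 * (1 : ℝ) * ((n : ℝ) + 1) + 3 * (1 : ℝ) ^ 2) /
        (((n : ℝ) + 1) * ((n : ℝ) + 1 - 1) * 1)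
        = (1 - (n : ℝ) + (n : ℝ) ^ 2) / ((n : ℝ) + (n : ℝ) ^ 2)) ∧
    ((((n : ℝ) + 1) ^ 2 - 3 * (n : ℝ) * ((n : ℝ) + 1) + 3 * (n : ℝ) ^ 2) /
        (((n : ℝ) + 1) * ((n : ℝ) + 1 - (n : ℝ)) * (n : ℝ))
        = (1 - (n : ℝ) + (n : ℝ) ^ 2) / ((n : ℝ) + (n : ℝ) ^ 2)) := by
  have hn' : (3 : ℝ) ≤ (n : ℝ) := by exact_mod_cast hn
  have hden2 : (0 : ℝ) < (n : ℝ) + (n : ℝ) ^ 2 := by nlinarith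
  refine ⟨?_, ?_, ?_⟩
  · intro l hl1 hln
    have hl1' : (1 : ℝ) ≤ (l : ℝ) := by exact_mod_cast hl1
    have hln' : (l : ℝ) ≤ (n : ℝ) := by exact_mod_cast hln
    have hden1 : (0 : ℝ) < ((n : ℝ) + 1) * ((n : ℝ) + 1 - (l : ℝ)) * (l : ℝ) := by
      have : (0:ℝ) < (n:ℝ) + 1 - (l:ℝ) := by linarith
      have : (0:ℝ) < (n:ℝ) + 1 := by linarith
      positivity
    rw [div_le_div_iff₀ hden1 hden2]
    nlinarith [mul_nonneg (mul_nonneg (pow_nonneg (by linarith : (0:ℝ) ≤ (n:ℝ)+1) 3)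
      (by linarith : (0:ℝ) ≤ (l:ℝ) - 1)) (by linarith : (0:ℝ) ≤ (n:ℝ) - (l:ℝ))]
  · rw [div_eq_div_iff (ne_of_gt (by nlinarith : (0:ℝ) < ((n:ℝ)+1) * ((n:ℝ)+1-1) * 1)) hden2.ne']; ring
  · rw [div_eq_div_iff (ne_of_gt (by nlinarith : (0:ℝ) < ((n:ℝ)+1) * ((n:ℝ)+1-(n:ℝ)) * (n:ℝ))) hden2.ne']; ring
end

section
/- For all integers n ≥ 3 and all integers l with 1 ≤ l ≤ n, the inequality ((n+1)^2 - 3l(n+1) + 3l^2) / ((n+1)(n+1-l)l) ≤ ((n+1)^2 - 3(n+1) + 3) / ((n+1)n) holds, with equality if and only if l = 1 or l = n. -/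
/-- For n ≥ 3 and 1 ≤ l ≤ n, f(l) ≤ f(1), with equality iff l = 1 or l = n. -/
theorem stmt_1 (n l : ℤ) (hn : 3 ≤ n) (hl1 : 1 ≤ l) (hln : l ≤ n) :
    ((((n : ℝ) + 1) ^ 2 - 3 * (l : ℝ) * ((n : ℝ) + 1) + 3 * (l : ℝ) ^ 2) /
        (((n : ℝ) + 1) * ((n : ℝ) + 1 - (l : ℝ)) * (l : ℝ))
      ≤ (((n : ℝ) + 1) ^ 2 - 3 * ((n : ℝ) + 1) + 3) / (((n : ℝ) + 1) * (n : ℝ))) ∧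
    ((((n : ℝ) + 1) ^ 2 - 3 * (l : ℝ) * ((n : ℝ) + 1) + 3 * (l : ℝ) ^ 2) /
        (((n : ℝ) + 1) * ((n : ℝ) + 1 - (l : ℝ)) * (l : ℝ))
      = (((n : ℝ) + 1) ^ 2 - 3 * ((n : ℝ) + 1) + 3) / (((n : ℝ) + 1) * (n : ℝ))
      ↔ l = 1 ∨ l = n) := by
  have ha : (3 : ℝ) ≤ (n : ℝ) := by exact_mod_cast hn
  have hx1 : (1 : ℝ) ≤ (l : ℝ) := by exact_mod_cast hl1
  have hxn : (l : ℝ) ≤ (n : ℝ) := by exact_mod_cast hln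
  have hd1 : (0 : ℝ) < ((n : ℝ) + 1) * ((n : ℝ) + 1 - (l : ℝ)) * (l : ℝ) := by
    apply mul_pos (mul_pos (by linarith) (by linarith)) (by linarith)
  have hd2 : (0 : ℝ) < ((n : ℝ) + 1) * (n : ℝ) := mul_pos (by linarith) (by linarith)
  constructor
  · rw [div_le_div_iff₀ hd1 hd2]
    nlinarith [mul_nonneg (mul_nonneg (sq_nonneg ((n : ℝ) + 1))
      (sub_nonneg.2 hx1)) (sub_nonneg.2 hxn)]
  · constructor
    · intro h
      rw [div_eq_div_iff hd1.ne' hd2.ne'] at h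
      have key : ((n : ℝ) + 1) ^ 2 * (((l : ℝ) - 1) * ((n : ℝ) - (l : ℝ))) = 0 := by
        nlinarith [h]
      have h2 : ((l : ℝ) - 1) * ((n : ℝ) - (l : ℝ)) = 0 := by
        have : ((n : ℝ) + 1) ^ 2 ≠ 0 := by positivity
        exact (mul_eq_zero.1 key).resolve_left this
      rcases mul_eq_zero.1 h2 with h3 | h3
      · left; have : (l : ℝ) = 1 := by linarith
        exact_mod_cast this
      · right; have : (l : ℝ) = (n : ℝ) := by linarith
        exact_mod_cast this
    · rintro (rfl | rfl)
      · norm_num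
      · rw [div_eq_div_iff hd1.ne' hd2.ne']; ring
end

section
/- For all even integers n ≥ 4 and all integers l with 1 ≤ l ≤ n, we have ((n+1)^2 - 3l(n+1) + 3l^2) / ((n+1)(n+1-l)l) ≥ (4 + 2n + n^2)/(2n + 3n^2 + n^3), with equality if and only if l = n/2 or l = n/2 + 1. -/
/-- For even n ≥ 4 and integers 1 ≤ l ≤ n, f(l) ≥ (4+2n+n^2)/(2n+3n^2+n^3),
with equality iff l = n/2 or l = n/2 + 1. -/
theorem stmt_3 (n l : ℤ) (hn : 4 ≤ n) (hne : Even n) (hl1 : 1 ≤ l) (hln : l ≤ n) :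
    (((4 : ℝ) + 2 * (n : ℝ) + (n : ℝ) ^ 2) /
        (2 * (n : ℝ) + 3 * (n : ℝ) ^ 2 + (n : ℝ) ^ 3)
      ≤ (((n : ℝ) + 1) ^ 2 - 3 * (l : ℝ) * ((n : ℝ) + 1) + 3 * (l : ℝ) ^ 2) /
          (((n : ℝ) + 1) * ((n : ℝ) + 1 - (l : ℝ)) * (l : ℝ))) ∧
    ((((n : ℝ) + 1) ^ 2 - 3 * (l : ℝ) * ((n : ℝ) + 1) + 3 * (l : ℝ) ^ 2) /
        (((n : ℝ) + 1) * ((n : ℝ) + 1 - (l : ℝ)) * (l : ℝ))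
      = ((4 : ℝ) + 2 * (n : ℝ) + (n : ℝ) ^ 2) /
          (2 * (n : ℝ) + 3 * (n : ℝ) ^ 2 + (n : ℝ) ^ 3)
      ↔ 2 * l = n ∨ 2 * l = n + 2) := by
  have hnr : (4 : ℝ) ≤ (n : ℝ) := by exact_mod_cast hn
  have hlr1 : (1 : ℝ) ≤ (l : ℝ) := by exact_mod_cast hl1
  have hlrn : (l : ℝ) ≤ (n : ℝ) := by exact_mod_cast hln
  have hd1 : (0 : ℝ) < 2 * (n : ℝ) + 3 * (n : ℝ) ^ 2 + (n : ℝ) ^ 3 := by nlinarith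
  have hd2 : (0 : ℝ) < ((n : ℝ) + 1) * ((n : ℝ) + 1 - (l : ℝ)) * (l : ℝ) := by
    have : (0:ℝ) < (n:ℝ) + 1 - (l:ℝ) := by linarith
    positivity
  -- key: product of two consecutive even integers is nonnegative
  obtain ⟨k, hk⟩ := hne
  have hP : 0 ≤ (2 * l - n) * (2 * l - n - 2) := by
    rcases le_or_gt l k with h | h
    · nlinarith
    · nlinarith
  have hPr : (0 : ℝ) ≤ (2 * (l : ℝ) - n) * (2 * (l : ℝ) - n - 2) := by
    exact_mod_cast hP
  constructor
  · rw [div_le_div_iff₀ hd1 hd2]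
    nlinarith [mul_nonneg (mul_nonneg hPr (by nlinarith : (0:ℝ) ≤ ((n:ℝ)+1)^2)) (le_of_lt hd1), sq_nonneg ((n:ℝ)+1)]
  · constructor
    · intro h
      rw [div_eq_div_iff hd2.ne' hd1.ne'] at h
      have hPz : (2 * (l : ℝ) - n) * (2 * (l : ℝ) - n - 2) = 0 := by
        have hsq : (0:ℝ) < ((n:ℝ)+1)^2 := by positivity
        nlinarith [mul_pos hsq hd1]
      have hPzi : (2 * l - n) * (2 * l - n - 2) = 0 := by exact_mod_cast hPz
      rcases mul_eq_zero.mp hPzi with h' | h'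
      · left; linarith
      · right; linarith
    · intro h
      rw [div_eq_div_iff hd2.ne' hd1.ne']
      rcases h with h | h
      · have hlr : (l : ℝ) = (n : ℝ) / 2 := by
          have : (2 : ℝ) * l = n := by exact_mod_cast h
          linarith
        rw [hlr]; ring
      · have hlr : (l : ℝ) = (n : ℝ) / 2 + 1 := by
          have : (2 : ℝ) * l = n + 2 := by exact_mod_cast h
          linarith
        rw [hlr]; ring
end

section
/- Let n ≥ 1 and let a, b ∈ ℝ. If the form f = a·p_2^2 + b·p_4 in n+1 real variables is nonnegative on all of ℝ^{n+1}, then f is a sum of squares of polynomials. -/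
open MvPolynomial

lemma aux_sos_fin {R : Type*} [CommRing R] {α : Type*} [Fintype α] (f : R) (g : α → R)
    (h : f = ∑ i, g i ^ 2) : ∃ (m : ℕ) (G : Fin m → R), f = ∑ i, G i ^ 2 := by
  refine ⟨Fintype.card α, fun i => g ((Fintype.equivFin α).symm i), ?_⟩
  rw [h, ← Equiv.sum_comp (Fintype.equivFin α).symm (fun i => g i ^ 2)]

lemma sum_offdiag_sq {R : Type*} [CommRing R] {ι : Type*} [Fintype ι] [DecidableEq ι] (x : ι → R) :
    ∑ p : ι × ι, (if p.1 ≠ p.2 then x p.1 * x p.2 else 0) ^ 2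
      = (∑ i, x i ^ 2) ^ 2 - ∑ i, x i ^ 4 := by
  rw [Fintype.sum_prod_type]
  have h1 : ∀ i j : ι, (if i ≠ j then x i * x j else 0) ^ 2
      = x i ^ 2 * x j ^ 2 - (if j = i then x i ^ 2 * x j ^ 2 else 0) := by
    intro i j
    by_cases h : i = j
    · simp [h]
    · simp [h, Ne.symm h, mul_pow]
  simp_rw [h1, Finset.sum_sub_distrib, Finset.sum_ite_eq' Finset.univ]
  simp only [Finset.mem_univ, if_true]
  congr 1
  · rw [sq, Finset.sum_mul_sum]
  · exact Finset.sum_congr rfl fun i _ => by ring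

lemma sum_diffsq {R : Type*} [CommRing R] {ι : Type*} [Fintype ι] (x : ι → R) :
    ∑ p : ι × ι, (x p.1 ^ 2 - x p.2 ^ 2) ^ 2
      = 2 * (Fintype.card ι : R) * (∑ i, x i ^ 4) - 2 * (∑ i, x i ^ 2) ^ 2 := by
  rw [Fintype.sum_prod_type]
  have h1 : ∀ i : ι, ∑ j : ι, (x i ^ 2 - x j ^ 2) ^ 2
      = (Fintype.card ι : R) * x i ^ 4 + (∑ j, x j ^ 4)
        - x i ^ 2 * (2 * ∑ j, x j ^ 2) := by
    intro i
    rw [Finset.mul_sum, Finset.mul_sum,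
      show (Fintype.card ι : R) * x i ^ 4 = ∑ _j : ι, x i ^ 4 by
        simp [Finset.sum_const, Finset.card_univ, nsmul_eq_mul],
      ← Finset.sum_add_distrib, ← Finset.sum_sub_distrib]
    exact Finset.sum_congr rfl fun j _ => by ring
  simp_rw [h1]
  rw [Finset.sum_sub_distrib, Finset.sum_add_distrib, Finset.sum_const, Finset.card_univ,
    ← Finset.mul_sum, ← Finset.sum_mul, nsmul_eq_mul]
  ring

/-- If f = a·p_2^2 + b·p_4 in n+1 variables is nonnegative on ℝ^{n+1},
then f is a sum of squares of polynomials. -/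
theorem stmt_10 (n : ℕ) (hn : 1 ≤ n) (a b : ℝ)
    (f : MvPolynomial (Fin (n + 1)) ℝ)
    (hf : f = C a * (∑ i : Fin (n + 1), X i ^ 2) ^ 2 + C b * ∑ i : Fin (n + 1), X i ^ 4)
    (hpsd : ∀ x : Fin (n + 1) → ℝ, 0 ≤ eval x f) :
    ∃ (m : ℕ) (g : Fin m → MvPolynomial (Fin (n + 1)) ℝ), f = ∑ i, g i ^ 2 := by
  have hn0 : (0:ℝ) < n := by exact_mod_cast hn
  -- evaluation at a standard basis vector : a + b ≥ 0
  have hab : 0 ≤ a + b := by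
    have h := hpsd (fun i => if i = 0 then (1:ℝ) else 0)
    rw [hf] at h
    have hs : ∀ k : ℕ, k ≠ 0 →
        ∑ i : Fin (n+1), (if i = 0 then (1:ℝ) else 0) ^ k = 1 := by
      intro k hk
      rw [Finset.sum_eq_single 0]
      · simp
      · intro i _ hi; simp [hi, zero_pow hk]
      · simp
    simp only [eval_add, eval_mul, eval_C, eval_pow, map_sum, eval_X] at h
    rw [hs 2 (by norm_num), hs 4 (by norm_num)] at h
    linarith
  -- evaluation at the all-ones vector : a(n+1) + b ≥ 0
  have hab2 : 0 ≤ a * ((n:ℝ)+1) + b := by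
    have h := hpsd (fun _ => 1)
    rw [hf] at h
    simp only [eval_add, eval_mul, eval_C, eval_pow, map_sum, eval_X, one_pow,
      Finset.sum_const, Finset.card_univ, Fintype.card_fin, nsmul_eq_mul, mul_one] at h
    have hc : ((n+1 : ℕ) : ℝ) = (n:ℝ) + 1 := by push_cast; ring
    rw [hc] at h
    nlinarith [hn0]
  set u : ℝ := (a * ((n:ℝ)+1) + b) / n with hu_def
  set v : ℝ := (a + b) / (2 * n) with hv_def
  have hu0 : 0 ≤ u := div_nonneg hab2 (le_of_lt hn0)
  have hv0 : 0 ≤ v := div_nonneg hab (by linarith)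
  have ha : a = u - 2 * v := by rw [hu_def, hv_def]; field_simp; ring
  have hb : b = 2 * v * ((n:ℝ)+1) - u := by rw [hu_def, hv_def]; field_simp; ring
  apply aux_sos_fin
    (α := (Fin (n+1) × Fin (n+1)) ⊕ (Fin (n+1) × Fin (n+1)))
    (g := Sum.elim
      (fun p => C (Real.sqrt u) * (if p.1 ≠ p.2 then X p.1 * X p.2 else 0))
      (fun p => C (Real.sqrt v) * (X p.1 ^ 2 - X p.2 ^ 2)))
  rw [Fintype.sum_sum_type]
  simp only [Sum.elim_inl, Sum.elim_inr, mul_pow, ← map_pow, Real.sq_sqrt hu0,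
    Real.sq_sqrt hv0]
  rw [← Finset.mul_sum, ← Finset.mul_sum, sum_offdiag_sq, sum_diffsq]
  have hcard : ((Fintype.card (Fin (n+1)) : ℕ) : MvPolynomial (Fin (n+1)) ℝ)
      = C ((n:ℝ) + 1) := by
    rw [Fintype.card_fin]
    exact (map_natCast (C : ℝ →+* MvPolynomial (Fin (n+1)) ℝ) (n+1)).symm.trans
      (congrArg C (by push_cast; ring))
  rw [hcard, hf, ha, hb]
  simp only [map_sub, map_mul, map_add, map_one, map_ofNat]
  ring
end

section
/- Let n ≥ 1, let l be an integer with 1 ≤ l ≤ n, and let s, t be real numbers satisfying l·t + (n+1-l)·s = 0 and l·t^2 + (n+1-l)·s^2 = 1. Then l·t^4 + (n+1-l)·s^4 = ((n+1)^2 - 3l(n+1) + 3l^2)/((n+1)(n+1-l)·l). -/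
/-- If l·t + (n+1-l)·s = 0 and l·t^2 + (n+1-l)·s^2 = 1, then
l·t^4 + (n+1-l)·s^4 = ((n+1)^2 - 3l(n+1) + 3l^2)/((n+1)(n+1-l)l). -/
theorem stmt_12 (n l : ℤ) (hn : 1 ≤ n) (hl1 : 1 ≤ l) (hln : l ≤ n) (s t : ℝ)
    (h1 : (l : ℝ) * t + ((n : ℝ) + 1 - (l : ℝ)) * s = 0)
    (h2 : (l : ℝ) * t ^ 2 + ((n : ℝ) + 1 - (l : ℝ)) * s ^ 2 = 1) :
    (l : ℝ) * t ^ 4 + ((n : ℝ) + 1 - (l : ℝ)) * s ^ 4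
      = (((n : ℝ) + 1) ^ 2 - 3 * (l : ℝ) * ((n : ℝ) + 1) + 3 * (l : ℝ) ^ 2) /
          (((n : ℝ) + 1) * ((n : ℝ) + 1 - (l : ℝ)) * (l : ℝ)) := by
  have ha : (0:ℝ) < (l:ℝ) := by exact_mod_cast hl1
  have hm : (0:ℝ) < (n:ℝ) + 1 - (l:ℝ) := by
    have : (l:ℝ) ≤ (n:ℝ) := by exact_mod_cast hln
    linarith
  have ht : t = -(((n:ℝ)+1-l)*s)/l := by
    field_simp
    linarith
  subst ht
  have hs2 : s^2 * (((n:ℝ)+1-l)*((n:ℝ)+1)) = l := by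
    field_simp at h2
    nlinarith [h2]
  have hs4 : s^4 * ((((n:ℝ)+1-l)*((n:ℝ)+1))^2) = (l:ℝ)^2 := by
    nlinarith [hs2]
  field_simp
  linear_combination ((((n:ℝ)+1)^2 - 3*(l:ℝ)*((n:ℝ)+1) + 3*(l:ℝ)^2)) * hs4
end

section
/- Let n ≥ 3 and let x ∈ ℝ^{n+1} satisfy ∑_i x_i = 0 and ∑_i x_i^2 = 1. If additionally x has at most two distinct coordinate values, then ∑_i x_i^4 ≤ (1 - n + n^2)/(n + n^2). -/
/-- If ∑ x_i = 0, ∑ x_i^2 = 1 and x has at most two distinct coordinate values,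
then ∑ x_i^4 ≤ (1 - n + n^2)/(n + n^2). -/
theorem stmt_18 (n : ℕ) (hn : 3 ≤ n) (x : Fin (n + 1) → ℝ)
    (h1 : ∑ i, x i = 0) (h2 : ∑ i, x i ^ 2 = 1)
    (h3 : ∃ s t : ℝ, ∀ i, x i = s ∨ x i = t) :
    ∑ i, x i ^ 4 ≤ (1 - (n : ℝ) + (n : ℝ) ^ 2) / ((n : ℝ) + (n : ℝ) ^ 2) := by
  classical
  obtain ⟨s, t, hst⟩ := h3
  set A : Finset (Fin (n+1)) := Finset.univ.filter (fun i => x i = s) with hA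
  set a : ℝ := (A.card : ℝ) with ha_def
  set b : ℝ := ((n:ℝ) + 1) - a with hb_def
  have hcard : A.card ≤ n + 1 := le_trans (Finset.card_filter_le _ _) (by simp)
  have key : ∀ f : ℝ → ℝ, ∑ i, f (x i) = a * f s + b * f t := by
    intro f
    rw [← Finset.sum_filter_add_sum_filter_not Finset.univ (fun i => x i = s)]
    have c1 : ∑ i ∈ Finset.univ.filter (fun i => x i = s), f (x i) = a * f s := by
      rw [Finset.sum_congr rfl (fun i hi => by rw [(Finset.mem_filter.mp hi).2])]
      simp [← hA, ha_def, mul_comm]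
    have c2 : ∑ i ∈ Finset.univ.filter (fun i => ¬ x i = s), f (x i) = b * f t := by
      rw [Finset.sum_congr rfl (fun i hi => by
        have h := (Finset.mem_filter.mp hi).2
        rw [(hst i).resolve_left h])]
      rw [Finset.sum_const, nsmul_eq_mul]
      have hc : (Finset.univ.filter (fun i => ¬ x i = s)).card = (n + 1) - A.card := by
        have := Finset.card_filter_add_card_filter_not (s := (Finset.univ : Finset (Fin (n+1)))) (p := fun i => x i = s)
        simp only [Finset.card_univ, Fintype.card_fin, ← hA] at this
        omega
      rw [hc, hb_def, ha_def]
      push_cast [Nat.cast_sub hcard]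
      ring
    rw [c1, c2]
  have e1 : a * s + b * t = 0 := by rw [← key (fun y => y)]; exact h1
  have e2 : a * s^2 + b * t^2 = 1 := by rw [← key (fun y => y^2)]; exact h2
  have e4 : ∑ i, x i ^ 4 = a * s^4 + b * t^4 := key (fun y => y^4)
  have hn1 : (0:ℝ) < (n:ℝ) + 1 := by positivity
  have hk1 : 1 ≤ A.card := by
    by_contra h
    have h0 : A.card = 0 := by omega
    have ha0 : a = 0 := by rw [ha_def, h0]; simp
    rw [ha0] at e1 e2
    have hb' : b = (n:ℝ) + 1 := by rw [hb_def, ha0]; ring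
    rw [hb'] at e1 e2
    have ht0 : t = 0 := by
      have := mul_eq_zero.mp (by linarith : ((n:ℝ)+1) * t = 0)
      rcases this with h' | h'
      · linarith
      · exact h'
    rw [ht0] at e2; simp at e2
  have hk2 : A.card ≤ n := by
    by_contra h
    have h0 : A.card = n + 1 := by omega
    have ha0 : a = (n:ℝ) + 1 := by rw [ha_def, h0]; push_cast; ring
    have hb0 : b = 0 := by rw [hb_def, ha0]; ring
    rw [ha0, hb0] at e1 e2
    have hs0 : s = 0 := by
      have := mul_eq_zero.mp (by linarith : ((n:ℝ)+1) * s = 0)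
      rcases this with h' | h'
      · linarith
      · exact h'
    rw [hs0] at e2; simp at e2
  have ha1 : (1:ℝ) ≤ a := by rw [ha_def]; exact_mod_cast hk1
  have hb1 : (1:ℝ) ≤ b := by
    rw [hb_def, ha_def]
    have : (A.card : ℝ) ≤ (n:ℝ) := by exact_mod_cast hk2
    linarith
  have hab : a + b = (n:ℝ) + 1 := by rw [hb_def]; ring
  -- key algebraic identities
  have hs2 : a * (a + b) * s^2 = b := by linear_combination (a*s - b*t) * e1 + b * e2
  have ht2 : b * (a + b) * t^2 = a := by linear_combination (b*t - a*s) * e1 + a * e2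
  have hsum4 : a * b * (a + b)^2 * (a * s^4 + b * t^4) = a^3 + b^3 := by
    linear_combination b*(a*(a+b)*s^2 + b) * hs2 + a*(b*(a+b)*t^2 + a) * ht2
  rw [e4]
  have hnR : (3:ℝ) ≤ (n:ℝ) := by exact_mod_cast hn
  have hQ : (0:ℝ) < (n:ℝ) + (n:ℝ)^2 := by nlinarith
  have hD : (0:ℝ) < a * b * (a + b)^2 := by positivity
  rw [show a * s^4 + b * t^4 = (a^3 + b^3) / (a * b * (a+b)^2) by
    field_simp
    linarith [hsum4]]
  rw [div_le_div_iff₀ hD hQ]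
  have hn' : (n:ℝ) = a + b - 1 := by linarith
  rw [hn']
  nlinarith [mul_nonneg (mul_nonneg (sub_nonneg.2 ha1) (sub_nonneg.2 hb1))
    (pow_nonneg (by linarith) 4 : (0:ℝ) ≤ (a+b)^4)]
end
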